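/- Let G = ⟨V, E, L, Σ_V, Σ_E⟩ be a finite fuzzy labeled graph with V nonempty, and let ℚ be a partition of V. Then ℚ is the partition corresponding to the largest bisimulation of G if and only if ℚ is the coarsest stable refinement of ℙ₀, i.e., ℚ is a stable refinement of ℙ₀ and every stable refinement of ℙ₀ is a refinement of ℚ. -/

import Mathlib

/-- A fuzzy labeled graph `G = ⟨V, E, L, Σ_V, Σ_E⟩`: the fuzzy set of labeled
edges `E : V × Σ_E × V → [0,1]` and the labeling function `L : V → (Σ_V → [0,1])`. -/
structure FuzzyGraph (V SV SE : Type*) where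
  edge : V → SE → V → unitInterval
  lab : V → SV → unitInterval

/-- A nonempty binary relation `Z ⊆ V × V` is a (crisp) bisimulation of `G`. -/
def IsBisimulation {V SV SE : Type*} (G : FuzzyGraph V SV SE) (Z : V → V → Prop) : Prop :=
  (∃ x x', Z x x') ∧
  (∀ x x', Z x x' → G.lab x = G.lab x') ∧
  (∀ x x' y (r : SE), Z x x' → 0 < G.edge x r y →
      ∃ y', Z y y' ∧ G.edge x r y ≤ G.edge x' r y') ∧
  (∀ x x' y' (r : SE), Z x x' → 0 < G.edge x' r y' →
      ∃ y, Z y y' ∧ G.edge x' r y' ≤ G.edge x r y)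

instance : Fact ((0:ℝ) ≤ 1) := ⟨zero_le_one⟩


/-- `sup E(x,r,Y)`, the supremum being taken in the complete lattice `[0,1]`. -/
noncomputable def supE {V SV SE : Type*} (G : FuzzyGraph V SV SE)
    (x : V) (r : SE) (Y : Set V) : unitInterval :=
  ⨆ y ∈ Y, G.edge x r y

/-- A set `X ⊆ V` is stable w.r.t. `⟨Y,r⟩` if `sup E(x,r,Y) = sup E(x',r,Y)`
for all `x, x' ∈ X`. -/
def StableWith {V SV SE : Type*} (G : FuzzyGraph V SV SE)
    (X Y : Set V) (r : SE) : Prop :=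
  ∀ x ∈ X, ∀ x' ∈ X, supE G x r Y = supE G x' r Y

/-- A partition `ℙ` is stable w.r.t. `⟨Y,r⟩` if every block of `ℙ` is. -/
def PartStableWith {V SV SE : Type*} (G : FuzzyGraph V SV SE)
    (P : Set (Set V)) (Y : Set V) (r : SE) : Prop :=
  ∀ X ∈ P, StableWith G X Y r

/-- A partition `ℙ` is stable if it is stable w.r.t. `⟨Y,r⟩`
for all blocks `Y ∈ ℙ` and all edge labels `r`. -/
def PartStable {V SV SE : Type*} (G : FuzzyGraph V SV SE) (P : Set (Set V)) : Prop :=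
  ∀ Y ∈ P, ∀ r : SE, PartStableWith G P Y r

/-- `ℙ` is a refinement of `ℚ` if every block of `ℙ` is contained in some block of `ℚ`. -/
def Refines {V : Type*} (P Q : Set (Set V)) : Prop :=
  ∀ X ∈ P, ∃ Y ∈ Q, X ⊆ Y

/-- The set of equivalence classes of a relation `Z`. -/
def classesOf {V : Type*} (Z : V → V → Prop) : Set (Set V) :=
  {s | ∃ x, s = {x' | Z x x'}}

/-- `ℙ₀`: the partition of `V` corresponding to the equivalence relation
`{(x,x') | L(x) = L(x') and sup E(x,r,V) = sup E(x',r,V) for all r}`. -/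
noncomputable def P0 {V SV SE : Type*} (G : FuzzyGraph V SV SE) : Set (Set V) :=
  classesOf (fun x x' => G.lab x = G.lab x' ∧
    ∀ r : SE, supE G x r Set.univ = supE G x' r Set.univ)

/-!
The largest bisimulation `Z` is an equivalence relation (the identity, the converse of `Z` and
`Z ∘ Z` are bisimulations), and its classes form a stable refinement of `ℙ₀`: a bisimulation
transfers each positive edge to a related target of at least the same degree, so related
vertices have the same suprema into `Z`-closed sets. Conversely, on a finite graph every
supremum is attained, so the "same block" relation of any stable refinement of `ℙ₀` is a
bisimulation, hence contained in `Z`; that is, the partition refines the classes of `Z`.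
Two partitions refining each other coincide.
-/

section

variable {V SV SE : Type*}

def SameBlock (P : Set (Set V)) (a b : V) : Prop :=
  ∃ X ∈ P, a ∈ X ∧ b ∈ X

theorem SameBlock.symm {P : Set (Set V)} {a b : V} (h : SameBlock P a b) : SameBlock P b a :=
  let ⟨X, hX, ha, hb⟩ := h
  ⟨X, hX, hb, ha⟩

def IsLargestBisimulation (G : FuzzyGraph V SV SE) (Z : V → V → Prop) : Prop :=
  IsBisimulation G Z ∧ ∀ Z' : V → V → Prop, IsBisimulation G Z' → ∀ x x', Z' x x' → Z x x'

section Partitions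

variable {P Q : Set (Set V)}

theorem Refines.subset (hP : Setoid.IsPartition P) (hPQ : Refines P Q) (hQP : Refines Q P) :
    P ⊆ Q := by
  intro X hX
  obtain ⟨Y, hY, hXY⟩ := hPQ X hX
  obtain ⟨X', hX', hYX'⟩ := hQP Y hY
  obtain ⟨a, ha⟩ := Setoid.nonempty_of_mem_partition hP hX
  have hXX' : X = X' := Setoid.eq_of_mem_eqv_class hP.2 hX ha hX' (hYX' (hXY ha))
  rwa [hXY.antisymm (hXX' ▸ hYX')]

theorem Refines.antisymm (hP : Setoid.IsPartition P) (hQ : Setoid.IsPartition Q)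
    (hPQ : Refines P Q) (hQP : Refines Q P) : P = Q :=
  (hPQ.subset hP hQP).antisymm (hQP.subset hQ hPQ)

theorem isPartition_classesOf {Z : V → V → Prop} (hZ : Equivalence Z) :
    Setoid.IsPartition (classesOf Z) :=
  -- `Setoid.classes` consists of the sets `{x | r x y}`, whence `flip Z`.
  Setoid.isPartition_classes ⟨flip Z, ⟨hZ.refl, hZ.symm, fun h₁ h₂ => hZ.trans h₂ h₁⟩⟩

theorem refines_classesOf {Z : V → V → Prop} (hP : Setoid.IsPartition P)
    (hPZ : ∀ a b, SameBlock P a b → Z a b) : Refines P (classesOf Z) := by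
  intro X hX
  obtain ⟨x, hx⟩ := Setoid.nonempty_of_mem_partition hP hX
  exact ⟨_, ⟨x, rfl⟩, fun b hb => hPZ x b ⟨X, hX, hx, hb⟩⟩

end Partitions

namespace FuzzyGraph

variable (G : FuzzyGraph V SV SE) {x x' : V} {r : SE} {Y Y' : Set V}

theorem edge_le_supE {y : V} (hy : y ∈ Y) : G.edge x r y ≤ supE G x r Y :=
  le_biSup _ hy

theorem supE_le_supE_of_forall_pos
    (h : ∀ y ∈ Y, 0 < G.edge x r y → ∃ y' ∈ Y', G.edge x r y ≤ G.edge x' r y') :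
    supE G x r Y ≤ supE G x' r Y' := by
  refine iSup₂_le fun y hy => ?_
  by_cases hpos : 0 < G.edge x r y
  · obtain ⟨y', hy', hle⟩ := h y hy hpos
    exact hle.trans (G.edge_le_supE hy')
  · exact (not_lt.mp hpos).trans unitInterval.nonneg'

theorem exists_supE_eq [Finite V] (hY : Y.Nonempty) : ∃ y ∈ Y, supE G x r Y = G.edge x r y := by
  obtain ⟨y, hy, hmax⟩ := Set.exists_max_image Y (G.edge x r) Y.toFinite hY
  exact ⟨y, hy, le_antisymm (iSup₂_le hmax) (G.edge_le_supE hy)⟩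

end FuzzyGraph

section Bisimulation

variable {G : FuzzyGraph V SV SE} {Z Z₁ Z₂ : V → V → Prop}

theorem isBisimulation_eq [Nonempty V] : IsBisimulation G (· = ·) := by
  inhabit V
  refine ⟨⟨default, default, rfl⟩, fun x x' h => h ▸ rfl, ?_, ?_⟩
  · rintro x _ y r rfl -
    exact ⟨y, rfl, le_rfl⟩
  · rintro x _ y r rfl -
    exact ⟨y, rfl, le_rfl⟩

theorem IsBisimulation.flip (h : IsBisimulation G Z) : IsBisimulation G (flip Z) :=
  let ⟨⟨x, x', hxx'⟩, hlab, hforth, hback⟩ := h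
  ⟨⟨x', x, hxx'⟩, fun x x' hx => (hlab x' x hx).symm,
    fun x x' y r hx hpos => hback x' x y r hx hpos,
    fun x x' y' r hx hpos => hforth x' x y' r hx hpos⟩

theorem IsBisimulation.comp (h₁ : IsBisimulation G Z₁) (h₂ : IsBisimulation G Z₂)
    (hne : ∃ x x', Relation.Comp Z₁ Z₂ x x') : IsBisimulation G (Relation.Comp Z₁ Z₂) := by
  obtain ⟨-, hlab₁, hforth₁, hback₁⟩ := h₁
  obtain ⟨-, hlab₂, hforth₂, hback₂⟩ := h₂
  refine ⟨hne, fun x x' ⟨m, hxm, hmx'⟩ => (hlab₁ x m hxm).trans (hlab₂ m x' hmx'), ?_, ?_⟩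
  · rintro x x' y r ⟨m, hxm, hmx'⟩ hpos
    obtain ⟨ym, hyym, hle₁⟩ := hforth₁ x m y r hxm hpos
    obtain ⟨y', hymy', hle₂⟩ := hforth₂ m x' ym r hmx' (hpos.trans_le hle₁)
    exact ⟨y', ⟨ym, hyym, hymy'⟩, hle₁.trans hle₂⟩
  · rintro x x' y' r ⟨m, hxm, hmx'⟩ hpos
    obtain ⟨ym, hymy', hle₂⟩ := hback₂ m x' y' r hmx' hpos
    obtain ⟨y, hyym, hle₁⟩ := hback₁ x m ym r hxm (hpos.trans_le hle₂)
    exact ⟨y, ⟨ym, hyym, hymy'⟩, hle₂.trans hle₁⟩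

theorem IsLargestBisimulation.equivalence (hZ : IsLargestBisimulation G Z) : Equivalence Z := by
  obtain ⟨hbis, hmax⟩ := hZ
  obtain ⟨x₀, x₀', hx₀⟩ := hbis.1
  have : Nonempty V := ⟨x₀⟩
  have refl (x : V) : Z x x := hmax _ isBisimulation_eq x x rfl
  refine ⟨refl, fun {x y} hxy => hmax _ hbis.flip y x hxy, fun {x y z} hxy hyz => ?_⟩
  exact hmax _ (hbis.comp hbis ⟨x₀, x₀', x₀, refl x₀, hx₀⟩) x z ⟨y, hxy, hyz⟩

theorem IsBisimulation.supE_eq {x x' : V} {r : SE} {Y : Set V} (h : IsBisimulation G Z)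
    (hY : ∀ y y', Z y y' → (y ∈ Y ↔ y' ∈ Y)) (hxx' : Z x x') :
    supE G x r Y = supE G x' r Y := by
  obtain ⟨-, -, hforth, hback⟩ := h
  apply le_antisymm
  · refine G.supE_le_supE_of_forall_pos fun y hy hpos => ?_
    obtain ⟨y', hyy', hle⟩ := hforth x x' y r hxx' hpos
    exact ⟨y', (hY y y' hyy').1 hy, hle⟩
  · refine G.supE_le_supE_of_forall_pos fun y' hy' hpos => ?_
    obtain ⟨y, hyy', hle⟩ := hback x x' y' r hxx' hpos
    exact ⟨y, (hY y y' hyy').2 hy', hle⟩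

theorem IsBisimulation.classesOf_refines_P0 (h : IsBisimulation G Z) :
    Refines (classesOf Z) (P0 G) := by
  rintro _ ⟨x, rfl⟩
  refine ⟨_, ⟨x, rfl⟩, fun x' hxx' => ⟨h.2.1 x x' hxx', fun r => h.supE_eq ?_ hxx'⟩⟩
  exact fun _ _ _ => iff_of_true (Set.mem_univ _) (Set.mem_univ _)

theorem IsBisimulation.partStable_classesOf (h : IsBisimulation G Z) (hZ : Equivalence Z) :
    PartStable G (classesOf Z) := by
  rintro _ ⟨z, rfl⟩ r _ ⟨w, rfl⟩ x hx x' hx'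
  refine h.supE_eq (fun y y' hyy' => ⟨fun hzy => ?_, fun hzy' => ?_⟩) (hZ.trans (hZ.symm hx) hx')
  exacts [hZ.trans hzy hyy', hZ.trans hzy' (hZ.symm hyy')]

end Bisimulation

section StablePartition

variable (G : FuzzyGraph V SV SE) [Finite V] {P : Set (Set V)}

theorem exists_edge_le_of_partStable (hP : Setoid.IsPartition P) (hPs : PartStable G P)
    {a b : V} (hab : SameBlock P a b) (r : SE) (y : V) :
    ∃ y', SameBlock P y y' ∧ G.edge a r y ≤ G.edge b r y' := by
  obtain ⟨X, hX, ha, hb⟩ := hab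
  obtain ⟨Y, ⟨hY, hy⟩, -⟩ := hP.2 y
  obtain ⟨y', hy', hmax⟩ := G.exists_supE_eq (x := b) (r := r) ⟨y, hy⟩
  refine ⟨y', ⟨Y, hY, hy, hy'⟩, ?_⟩
  calc G.edge a r y ≤ supE G a r Y := G.edge_le_supE hy
    _ = supE G b r Y := hPs Y hY r X hX a ha b hb
    _ = G.edge b r y' := hmax

theorem isBisimulation_sameBlock [Nonempty V] (hP : Setoid.IsPartition P)
    (hP0 : Refines P (P0 G)) (hPs : PartStable G P) : IsBisimulation G (SameBlock P) := by
  refine ⟨?_, ?_, fun a b y r hab _ => exists_edge_le_of_partStable G hP hPs hab r y,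
    fun a b y' r hab _ => ?_⟩
  · obtain ⟨x⟩ := ‹Nonempty V›
    obtain ⟨X, ⟨hX, hx⟩, -⟩ := hP.2 x
    exact ⟨x, x, X, hX, hx, hx⟩
  · rintro a b ⟨X, hX, ha, hb⟩
    obtain ⟨_, ⟨z, rfl⟩, hXz⟩ := hP0 X hX
    exact (hXz ha).1.symm.trans (hXz hb).1
  · obtain ⟨y, hy, hle⟩ := exists_edge_le_of_partStable G hP hPs hab.symm r y'
    exact ⟨y, hy.symm, hle⟩

end StablePartition

end

theorem partition_of_largest_bisim_iff_coarsest_stable_refinement_general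
    {V SV SE : Type*} [Fintype V]
    (G : FuzzyGraph V SV SE) (Z : V → V → Prop)
    (hZ : IsBisimulation G Z ∧
      ∀ Z' : V → V → Prop, IsBisimulation G Z' → ∀ x x', Z' x x' → Z x x')
    (Q : Set (Set V)) (hQ : Setoid.IsPartition Q) :
    Q = classesOf Z ↔
      (Refines Q (P0 G) ∧ PartStable G Q ∧
        ∀ P : Set (Set V), Setoid.IsPartition P → Refines P (P0 G) → PartStable G P →
          Refines P Q) := by
  have hZeq : Equivalence Z := IsLargestBisimulation.equivalence hZ
  obtain ⟨hbis, hmax⟩ := hZ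
  have : Nonempty V := let ⟨x, _⟩ := hbis.1; ⟨x⟩
  have hcoarsest (P : Set (Set V)) (hP : Setoid.IsPartition P) (hP0 : Refines P (P0 G))
      (hPs : PartStable G P) : Refines P (classesOf Z) :=
    refines_classesOf hP (hmax _ (isBisimulation_sameBlock G hP hP0 hPs))
  have hZpart := isPartition_classesOf hZeq
  constructor
  · rintro rfl
    exact ⟨hbis.classesOf_refines_P0, hbis.partStable_classesOf hZeq, hcoarsest⟩
  · rintro ⟨hQ0, hQs, hQcoarsest⟩
    refine Refines.antisymm hQ hZpart (hcoarsest Q hQ hQ0 hQs) ?_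
    exact hQcoarsest _ hZpart hbis.classesOf_refines_P0 (hbis.partStable_classesOf hZeq)

/-- For a finite fuzzy graph `G` with nonempty vertex set: a partition `ℚ` of `V`
is the partition corresponding to the largest bisimulation of `G` iff it is the
coarsest stable refinement of `ℙ₀`. -/
theorem partition_of_largest_bisim_iff_coarsest_stable_refinement
    {V SV SE : Type*} [Fintype V] [Fintype SV] [Fintype SE] [Nonempty V]
    (G : FuzzyGraph V SV SE) (Z : V → V → Prop)
    (hZ : IsBisimulation G Z ∧
      ∀ Z' : V → V → Prop, IsBisimulation G Z' → ∀ x x', Z' x x' → Z x x')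
    (Q : Set (Set V)) (hQ : Setoid.IsPartition Q) :
    Q = classesOf Z ↔
      (Refines Q (P0 G) ∧ PartStable G Q ∧
        ∀ P : Set (Set V), Setoid.IsPartition P → Refines P (P0 G) → PartStable G P →
          Refines P Q) :=
  partition_of_largest_bisim_iff_coarsest_stable_refinement_general G Z hZ Q hQ
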